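/- Let T = ⋂ᵢ₌₁ⁿ (xᵢ + C) be a proper intersection of n ≥ 2 translates of a smooth strictly convex domain C in ℝ². Then T has exactly n singular boundary points. -/

import Mathlib

open Pointwise
open scoped RealInnerProductSpace

abbrev Plane := EuclideanSpace ℝ (Fin 2)

/-- A convex domain: compact, convex, with nonempty interior. -/
def IsConvexDomain (C : Set Plane) : Prop :=
  IsCompact C ∧ Convex ℝ C ∧ (interior C).Nonempty

/-- A strictly convex domain: a convex domain where the open segment between any two
distinct boundary points lies in the interior. -/
def IsStrictConvexDomain (C : Set Plane) : Prop :=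
  IsConvexDomain C ∧
    ∀ x ∈ frontier C, ∀ y ∈ frontier C, x ≠ y → openSegment ℝ x y ⊆ interior C

/-- `u` is an outer unit normal of a supporting line of `C` at `x`. -/
def IsOuterNormalAt (C : Set Plane) (x u : Plane) : Prop :=
  ‖u‖ = 1 ∧ ∀ y ∈ C, (inner ℝ u y : ℝ) ≤ inner ℝ u x

/-- A singular boundary point: a boundary point admitting two distinct supporting lines
(equivalently, two distinct outer unit normals). -/
def IsSingularPt (C : Set Plane) (x : Plane) : Prop :=
  x ∈ frontier C ∧ ∃ u v : Plane, u ≠ v ∧ IsOuterNormalAt C x u ∧ IsOuterNormalAt C x v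

/-- Smooth: every boundary point has a unique outer unit normal (unique supporting line). -/
def IsSmoothDomain (C : Set Plane) : Prop :=
  ∀ x ∈ frontier C, ∃! u : Plane, IsOuterNormalAt C x u

/-!
Call a unit vector `w` an edge normal of the points `x i` when `m ↦ ⟪w, x m⟫` attains its minimum
at two indices, i.e. when `-w` is the outer normal of an edge of the polygon `conv {x i}`.
Reducedness makes each `x j` an exposed vertex: walking from an interior point of `T` to a point
of `⋂ i ≠ j, (x i + C)` outside `x j + C`, one leaves `x j + C` at a point `z` interior to all
other translates; for the outer normal `v` of `x j + C` at `z`, `j` is the unique minimizer of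
`⟪v, x ·⟫`, and `v` supports `T` only at the non-singular point `z`.

Singular points correspond to edge normals. The support point of `T` in an edge normal direction
is singular, since a normal of `x i + C` at a point interior to all other translates makes `i` the
unique minimizer. At a singular point two translates meet, and interpolating between their
normals produces an edge normal. A singular point supports only one edge normal `w`: the exposing
directions of the two minimizers of `w` lie on opposite sides of `ℝ w`, and a second edge normal
would either lie in the cone spanned by `w` and one of them, and then have a unique minimizer, or
put that exposing direction into the normal cone of the point.

Edge normals are counted by double counting the pairs `(w, i)` with `i` minimizing `w`: each edge
normal has exactly two minimizers, since of three collinear points the middle one is not exposed,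
and each vertex `x i` has exactly two edge normals, the inner normals of the two extreme rays of
the cone spanned by the `x m - x i`.
-/

open Set Filter Topology Module

section Topology

variable {X : Type*} [TopologicalSpace X]

theorem IsPreconnected.inter_frontier_nonempty {s t : Set X} (hs : IsPreconnected s)
    (hst : (s ∩ t).Nonempty) (hsnt : (s \ t).Nonempty) : (s ∩ frontier t).Nonempty := by
  by_contra h
  have hcover : s ⊆ interior t ∪ (closure t)ᶜ := fun y hy => by
    by_contra hy'
    simp only [mem_union, mem_compl_iff, not_or, not_not] at hy'
    exact h ⟨y, hy, hy'.2, hy'.1⟩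
  have hdisj : Disjoint (interior t) (closure t)ᶜ :=
    disjoint_compl_right.mono_left interior_subset_closure
  rcases hs.subset_or_subset isOpen_interior isClosed_closure.isOpen_compl hdisj hcover with
    hsub | hsub
  · obtain ⟨y, hys, hyt⟩ := hsnt
    exact hyt (interior_subset (hsub hys))
  · obtain ⟨y, hys, hyt⟩ := hst
    exact hsub hys (subset_closure hyt)

theorem mem_frontier_iInter_iff {ι : Type*} [Finite ι] {s : ι → Set X}
    (hs : ∀ i, IsClosed (s i)) {p : X} (hp : p ∈ ⋂ i, s i) :
    p ∈ frontier (⋂ i, s i) ↔ ∃ i, p ∈ frontier (s i) := by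
  simp only [(isClosed_iInter hs).frontier_eq, (hs _).frontier_eq, interior_iInter_of_finite,
    Set.mem_sdiff, mem_iInter, not_forall]
  exact ⟨fun ⟨_, i, hi⟩ => ⟨i, mem_iInter.1 hp i, hi⟩,
    fun ⟨i, _, hi⟩ => ⟨mem_iInter.1 hp, i, hi⟩⟩

theorem frontier_vadd {G : Type*} [AddGroup G] [AddAction G X] [ContinuousConstVAdd G X]
    (c : G) (s : Set X) : frontier (c +ᵥ s) = c +ᵥ frontier s := by
  simp only [frontier, closure_vadd, interior_vadd, vadd_set_sdiff]

end Topology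

theorem strictConvex_iInter {𝕜 E ι : Type*} [Semiring 𝕜] [PartialOrder 𝕜] [TopologicalSpace E]
    [AddCommMonoid E] [SMul 𝕜 E] [Finite ι] {s : ι → Set E} (hs : ∀ i, StrictConvex 𝕜 (s i)) :
    StrictConvex 𝕜 (⋂ i, s i) := by
  intro p hp q hq hpq a b ha hb hab
  rw [interior_iInter_of_finite, mem_iInter]
  exact fun i => hs i (mem_iInter.1 hp i) (mem_iInter.1 hq i) hpq ha hb hab

theorem eq_inv_norm_smul_of_eq_smul {E : Type*} [NormedAddCommGroup E] [NormedSpace ℝ E]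
    {w e : E} {c : ℝ} (hw : ‖w‖ = 1) (hc : 0 < c) (h : w = c • e) : w = ‖e‖⁻¹ • e := by
  have hce : c * ‖e‖ = 1 := by rw [← hw, h, norm_smul, Real.norm_of_nonneg hc.le]
  rw [h, eq_inv_of_mul_eq_one_left hce]

section InnerProductSpace

variable {E : Type*} [NormedAddCommGroup E] [InnerProductSpace ℝ E] {K : Set E} {u p q : E}

theorem inner_lt_of_mem_interior {c : ℝ} (hu : u ≠ 0) (hp : p ∈ interior K)
    (hK : ∀ y ∈ K, ⟪u, y⟫ ≤ c) : ⟪u, p⟫ < c := by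
  have hlim : Tendsto (fun t : ℝ => p + t • u) (𝓝[>] 0) (𝓝 p) :=
    (Continuous.tendsto' (by fun_prop) 0 p (by simp)).mono_left nhdsWithin_le_nhds
  obtain ⟨t, htK, ht⟩ :=
    ((hlim.eventually (mem_interior_iff_mem_nhds.1 hp)).and self_mem_nhdsWithin).exists
  have := hK _ htK
  rw [inner_add_right, real_inner_smul_right, real_inner_self_eq_norm_sq] at this
  have : 0 < t * ‖u‖ ^ 2 := mul_pos ht (by positivity)
  linarith

theorem StrictConvex.eq_of_forall_inner_le (hK : StrictConvex ℝ K) (hu : u ≠ 0) (hp : p ∈ K)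
    (hq : q ∈ K) (hpu : ∀ y ∈ K, ⟪u, y⟫ ≤ ⟪u, p⟫) (hqu : ∀ y ∈ K, ⟪u, y⟫ ≤ ⟪u, q⟫) :
    p = q := by
  by_contra hpq
  have hmid := inner_lt_of_mem_interior hu
    (hK hp hq hpq (half_pos one_pos) (half_pos one_pos) (add_halves 1)) hpu
  rw [inner_add_right, real_inner_smul_right, real_inner_smul_right] at hmid
  linarith [hpu q hq, hqu p hp]

theorem exists_unit_forall_inner_le_of_mem_frontier [CompleteSpace E] (hK : Convex ℝ K)
    (hKi : (interior K).Nonempty) (hp : p ∈ frontier K) :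
    ∃ u : E, ‖u‖ = 1 ∧ ∀ y ∈ K, ⟪u, y⟫ ≤ ⟪u, p⟫ := by
  obtain ⟨f, hf⟩ := geometric_hahn_banach_open_point hK.interior isOpen_interior hp.2
  have hfK : K ⊆ {y | f y ≤ f p} := by
    calc K ⊆ closure K := subset_closure
      _ = closure (interior K) := (hK.closure_interior_eq_closure_of_nonempty_interior hKi).symm
      _ ⊆ {y | f y ≤ f p} :=
        closure_minimal (fun y hy => (hf y hy).le) (isClosed_le f.continuous continuous_const)
  set u₀ := (InnerProductSpace.toDual ℝ E).symm f
  have hu₀ : ∀ y, ⟪u₀, y⟫ = f y := fun y => InnerProductSpace.toDual_symm_apply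
  have hu₀0 : u₀ ≠ 0 := by
    obtain ⟨c, hc⟩ := hKi
    intro h
    simpa [← hu₀, h] using hf c hc
  refine ⟨‖u₀‖⁻¹ • u₀, norm_smul_inv_norm hu₀0, fun y hy => ?_⟩
  simp only [real_inner_smul_left, hu₀]
  exact mul_le_mul_of_nonneg_left (hfK hy) (by positivity)

end InnerProductSpace

section EdgeNormals

variable {E : Type*} [NormedAddCommGroup E] [InnerProductSpace ℝ E] {ι : Type*} (x : ι → E)

def MinAt (w : E) (i : ι) : Prop := ∀ m, ⟪w, x i⟫ ≤ ⟪w, x m⟫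

def StrictMinAt (w : E) (i : ι) : Prop := ∀ m ≠ i, ⟪w, x i⟫ < ⟪w, x m⟫

/-- `-w` is the outer unit normal of an edge of the polygon spanned by the points `x i`. -/
def IsEdgeNormal (w : E) : Prop := ‖w‖ = 1 ∧ ∃ i j, i ≠ j ∧ MinAt x w i ∧ MinAt x w j

def IsEdgeNormalAt (w : E) (i : ι) : Prop :=
  ‖w‖ = 1 ∧ MinAt x w i ∧ ∃ m ≠ i, ⟪w, x m⟫ = ⟪w, x i⟫

variable {x} {v w : E} {i j : ι}

theorem IsEdgeNormal.ne_zero (hw : IsEdgeNormal x w) : w ≠ 0 :=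
  norm_ne_zero_iff.1 (hw.1.trans_ne one_ne_zero)

theorem StrictMinAt.minAt (h : StrictMinAt x v i) : MinAt x v i := fun m => by
  rcases eq_or_ne m i with rfl | hm
  · exact le_rfl
  · exact (h m hm).le

theorem StrictMinAt.not_minAt (h : StrictMinAt x v i) (hji : j ≠ i) : ¬ MinAt x v j :=
  fun hj => (h j hji).not_ge (hj i)

theorem MinAt.smul (h : MinAt x w i) {c : ℝ} (hc : 0 ≤ c) : MinAt x (c • w) i := fun m => by
  simp only [real_inner_smul_left]
  exact mul_le_mul_of_nonneg_left (h m) hc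

theorem MinAt.add_strictMinAt (hw : MinAt x w i) (hv : StrictMinAt x v i) {α β : ℝ}
    (hα : 0 ≤ α) (hβ : 0 < β) : StrictMinAt x (α • w + β • v) i := fun m hm => by
  simp only [inner_add_left, real_inner_smul_left]
  nlinarith [mul_le_mul_of_nonneg_left (hw m) hα, mul_lt_mul_of_pos_left (hv m hm) hβ]

theorem IsEdgeNormal.not_strictMinAt (hw : IsEdgeNormal x w) : ¬ StrictMinAt x w i := by
  intro h
  obtain ⟨-, j, k, hjk, hj, hk⟩ := hw
  rcases eq_or_ne j i with rfl | hji
  · exact h.not_minAt hjk.symm hk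
  · exact h.not_minAt hji hj

theorem isEdgeNormal_and_minAt_iff : IsEdgeNormal x w ∧ MinAt x w i ↔ IsEdgeNormalAt x w i := by
  refine ⟨fun ⟨⟨hw1, j, k, hjk, hj, hk⟩, hi⟩ => ⟨hw1, hi, ?_⟩,
    fun ⟨hw1, hi, m, hm, htie⟩ => ⟨⟨hw1, m, i, hm, fun k => htie ▸ hi k, hi⟩, hi⟩⟩
  rcases eq_or_ne j i with rfl | hji
  · exact ⟨k, hjk.symm, le_antisymm (hk j) (hj k)⟩
  · exact ⟨j, hji, le_antisymm (hj i) (hi j)⟩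

theorem injective_of_forall_exists_strictMinAt (hx : ∀ i, ∃ v, StrictMinAt x v i) :
    Function.Injective x := by
  intro i j hij
  by_contra hne
  obtain ⟨v, hv⟩ := hx i
  simpa [hij] using hv j (Ne.symm hne)

theorem StrictMinAt.not_wbtw (hv : StrictMinAt x v j) {i k : ι} (hij : i ≠ j) (hkj : k ≠ j) :
    ¬ Wbtw ℝ (x i) (x j) (x k) := by
  rintro ⟨t, ⟨ht0, ht1⟩, hxj⟩
  have hcomb : ⟪v, x j⟫ = (1 - t) * ⟪v, x i⟫ + t * ⟪v, x k⟫ := by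
    rw [← hxj, AffineMap.lineMap_apply_module, inner_add_right, real_inner_smul_right,
      real_inner_smul_right]
  have hi := hv i hij
  have hk := hv k hkj
  rcases ht0.eq_or_lt with rfl | ht0
  · linarith
  · nlinarith [mul_pos ht0 (sub_pos.2 hk), mul_nonneg (sub_nonneg.2 ht1) (sub_pos.2 hi).le]

theorem exists_minAt_minAt_of_segment [Fintype ι] {a b : E} (ha : MinAt x a i) (hji : j ≠ i)
    (hb : ⟪b, x j⟫ ≤ ⟪b, x i⟫) :
    ∃ t ∈ Icc (0 : ℝ) 1, ∃ m ≠ i,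
      MinAt x ((1 - t) • a + t • b) i ∧ MinAt x ((1 - t) • a + t • b) m := by
  classical
  set g : ℝ → E := fun t => (1 - t) • a + t • b
  have hS : (Finset.univ.erase i).Nonempty := ⟨j, by simpa using hji⟩
  -- intermediate value theorem for the smallest gap `⟪g t, x m - x i⟫`, `m ≠ i`
  set φ : ℝ → ℝ := fun t => (Finset.univ.erase i).inf' hS fun m => ⟪g t, x m - x i⟫
  have hφ : Continuous φ := Continuous.finset_inf'_apply hS fun m _ => by fun_prop
  have hφ1 : φ 1 ≤ 0 := (Finset.inf'_le _ (by simpa using hji)).trans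
    (by simp only [g, sub_self, zero_smul, one_smul, zero_add, inner_sub_right]; linarith)
  have hφ0 : 0 ≤ φ 0 := Finset.le_inf' _ _ fun m _ => by
    simp only [g, sub_zero, one_smul, zero_smul, add_zero, inner_sub_right]
    linarith [ha m]
  obtain ⟨t, ht, hφt⟩ := intermediate_value_Icc' zero_le_one hφ.continuousOn ⟨hφ1, hφ0⟩
  have hmin : MinAt x (g t) i := fun m => by
    rcases eq_or_ne m i with rfl | hm
    · exact le_rfl
    · have h : φ t ≤ ⟪g t, x m - x i⟫ := Finset.inf'_le _ (by simpa using hm)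
      rw [hφt, inner_sub_right] at h
      linarith
  obtain ⟨m, hm, hφm⟩ := Finset.exists_mem_eq_inf' hS fun m => ⟪g t, x m - x i⟫
  have htie : ⟪g t, x m - x i⟫ = 0 := hφm ▸ hφt
  rw [inner_sub_right] at htie
  exact ⟨t, ht, m, (Finset.mem_erase.1 hm).1, hmin, fun k => by linarith [hmin k]⟩

end EdgeNormals

section TwoDimensional

attribute [local instance] FiniteDimensional.of_fact_finrank_eq_two

variable {E : Type*} [NormedAddCommGroup E] [InnerProductSpace ℝ E] [Fact (finrank ℝ E = 2)]

theorem nonempty_orientation : Nonempty (Orientation ℝ E (Fin 2)) :=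
  ⟨(finBasisOfFinrankEq ℝ E Fact.out).orientation⟩

namespace Orientation

variable (o : Orientation ℝ E (Fin 2))

local notation "ω" => o.areaForm
local notation "J" => o.rightAngleRotation

theorem inner_smul_add_areaForm_smul (a z : E) : ⟪a, z⟫ • a + ω a z • J a = ‖a‖ ^ 2 • z := by
  refine ext_inner_right ℝ fun y => ?_
  rw [inner_add_left, real_inner_smul_left, real_inner_smul_left, real_inner_smul_left,
    o.inner_rightAngleRotation_left, o.inner_mul_inner_add_areaForm_mul_areaForm]

theorem exists_eq_smul_of_areaForm_eq_zero {a z : E} (ha : a ≠ 0) (h : ω a z = 0) :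
    ∃ c : ℝ, z = c • a := by
  have hdec := o.inner_smul_add_areaForm_smul a z
  rw [h, zero_smul, add_zero] at hdec
  refine ⟨⟪a, z⟫ / ‖a‖ ^ 2, ?_⟩
  rw [div_eq_inv_mul, mul_smul, hdec, inv_smul_smul₀ (by positivity)]

/-- For a unit vector `v`, the coordinates of `d` in the frame `(v, J v)` are `(⟪v, d⟫, ω v d)`. -/
noncomputable def slope (v d : E) : ℝ := ω v d / ⟪v, d⟫

theorem inner_eq_mul_add_areaForm_mul_slope {v d : E} (hv : ‖v‖ = 1) (hd : ⟪v, d⟫ ≠ 0) (w : E) :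
    ⟪w, d⟫ = ⟪v, d⟫ * (⟪v, w⟫ + ω v w * o.slope v d) := by
  rw [← one_mul ⟪w, d⟫, ← one_pow 2, ← hv, ← o.inner_mul_inner_add_areaForm_mul_areaForm, slope]
  field_simp

/-- Of two vectors strictly on the same side of the line `ℝ w`, one lies in the cone spanned by
`w` and the other. -/
theorem exists_eq_add_of_areaForm_mul_pos {w a b : E} (hw : w ≠ 0) (h : 0 < ω w a * ω w b) :
    (∃ α β : ℝ, 0 ≤ α ∧ 0 < β ∧ b = α • w + β • a) ∨
      (∃ α β : ℝ, 0 ≤ α ∧ 0 < β ∧ a = α • w + β • b) := by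
  have ha : ω w a ≠ 0 := left_ne_zero_of_mul h.ne'
  set r := ω w b / ω w a
  have hr : 0 < r := div_pos_iff.2 ((mul_pos_iff.1 h).imp And.symm And.symm)
  obtain ⟨γ, hγ⟩ := o.exists_eq_smul_of_areaForm_eq_zero hw (z := b - r • a) (by
    simp only [map_sub, map_smul, smul_eq_mul, r]
    field_simp
    ring)
  have hb : b = γ • w + r • a := by rw [← hγ]; abel
  rcases le_or_gt 0 γ with hγ0 | hγ0
  · exact Or.inl ⟨γ, r, hγ0, hr, hb⟩
  · refine Or.inr ⟨-γ / r, 1 / r, div_nonneg (neg_nonneg.2 hγ0.le) hr.le, one_div_pos.2 hr, ?_⟩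
    rw [hb]
    match_scalars <;> field_simp
    ring

end Orientation

variable {ι : Type*} {x : ι → E} {v w : E} {i j : ι}

theorem collinear_of_inner_eq {p q r : E} (hw : w ≠ 0) (hq : ⟪w, q⟫ = ⟪w, p⟫)
    (hr : ⟪w, r⟫ = ⟪w, p⟫) : Collinear ℝ {p, q, r} := by
  obtain ⟨o⟩ := nonempty_orientation (E := E)
  have hJw : o.rightAngleRotation w ≠ 0 := by simpa using hw
  have hline : ∀ y, ⟪w, y⟫ = ⟪w, p⟫ → ∃ s : ℝ, y = s • o.rightAngleRotation w +ᵥ p :=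
    fun y hy => by
      obtain ⟨s, hs⟩ := o.exists_eq_smul_of_areaForm_eq_zero hJw (z := y - p) (by
        rw [o.areaForm_rightAngleRotation_left, inner_sub_right, hy, sub_self, neg_zero])
      exact ⟨s, by rw [vadd_eq_add, ← hs, sub_add_cancel]⟩
  rw [collinear_iff_of_mem (mem_insert p _)]
  refine ⟨o.rightAngleRotation w, ?_⟩
  simp only [mem_insert_iff, mem_singleton_iff, forall_eq_or_imp, forall_eq]
  exact ⟨hline p rfl, hline q hq, hline r hr⟩

theorem IsEdgeNormal.exists_setOf_minAt_eq_pair (hx : ∀ i, ∃ v, StrictMinAt x v i)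
    (hw : IsEdgeNormal x w) : ∃ i j, i ≠ j ∧ {m | MinAt x w m} = {i, j} := by
  have hw0 := hw.ne_zero
  obtain ⟨-, i, j, hij, hi, hj⟩ := hw
  refine ⟨i, j, hij, Subset.antisymm (fun m hm => ?_) ?_⟩
  · by_contra hmij
    simp only [mem_insert_iff, mem_singleton_iff, not_or] at hmij
    have hcol := collinear_of_inner_eq hw0 (le_antisymm (hj i) (hi j))
      (le_antisymm (hm i) (hi m))
    obtain ⟨vi, hvi⟩ := hx i
    obtain ⟨vj, hvj⟩ := hx j
    obtain ⟨vm, hvm⟩ := hx m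
    rcases hcol.wbtw_or_wbtw_or_wbtw with h | h | h
    · exact hvj.not_wbtw hij hmij.2 h
    · exact hvm.not_wbtw (Ne.symm hmij.2) (Ne.symm hmij.1) h
    · exact hvi.not_wbtw hmij.1 hij.symm h
  · rintro m (rfl | rfl)
    exacts [hi, hj]

theorem StrictMinAt.inner_sub_inner_eq (o : Orientation ℝ E (Fin 2)) (hv : StrictMinAt x v i)
    (hv1 : ‖v‖ = 1) {m : ι} (hm : m ≠ i) (w : E) :
    ⟪w, x m⟫ - ⟪w, x i⟫ = ⟪v, x m - x i⟫ * (⟪v, w⟫ + o.areaForm v w * o.slope v (x m - x i)) := by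
  rw [← inner_sub_right]
  refine o.inner_eq_mul_add_areaForm_mul_slope hv1 (ne_of_gt ?_) w
  rw [inner_sub_right]
  linarith [hv m hm]

/-- Writing `w = ⟪v, w⟫ • v + ω v w • J v`, the edge condition at `i` says that `-⟪v, w⟫ / ω v w`
is an extreme slope of the `x m - x i`, the largest one when `ω v w < 0`. -/
theorem IsEdgeNormalAt.eq_smul_slope_smul_sub (o : Orientation ℝ E (Fin 2))
    (hv : StrictMinAt x v i) (hv1 : ‖v‖ = 1) {m₁ : ι} (hm₁i : m₁ ≠ i)
    (hmax : ∀ m ≠ i, o.slope v (x m - x i) ≤ o.slope v (x m₁ - x i))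
    (hw : IsEdgeNormalAt x w i) (hwv : o.areaForm v w < 0) :
    w = (-o.areaForm v w) • (o.slope v (x m₁ - x i) • v - o.rightAngleRotation v) := by
  obtain ⟨-, hwmin, m₀, hm₀, htie⟩ := hw
  have hα : ∀ m ≠ i, 0 < ⟪v, x m - x i⟫ := fun m hm => by
    rw [inner_sub_right]; linarith [hv m hm]
  have hzero : ⟪v, w⟫ + o.areaForm v w * o.slope v (x m₀ - x i) = 0 := by
    have := hv.inner_sub_inner_eq o hv1 hm₀ w
    rw [htie, sub_self] at this
    exact (mul_eq_zero.1 this.symm).resolve_left (hα m₀ hm₀).ne'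
  have hs : o.slope v (x m₀ - x i) = o.slope v (x m₁ - x i) := le_antisymm (hmax m₀ hm₀) <| by
    have := nonneg_of_mul_nonneg_right
      (by rw [← hv.inner_sub_inner_eq o hv1 hm₁i w]; linarith [hwmin m₁]) (hα m₁ hm₁i)
    nlinarith
  rw [hs] at hzero
  have hdec := o.inner_smul_add_areaForm_smul v w
  rw [hv1, one_pow, one_smul] at hdec
  refine hdec.symm.trans ?_
  match_scalars <;> linarith

theorem StrictMinAt.existsUnique_isEdgeNormalAt_areaForm_neg [Fintype ι] [Nontrivial ι]
    (o : Orientation ℝ E (Fin 2)) (hv : StrictMinAt x v i) (hv1 : ‖v‖ = 1) :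
    ∃! e, IsEdgeNormalAt x e i ∧ o.areaForm v e < 0 := by
  classical
  set s : ι → ℝ := fun m => o.slope v (x m - x i)
  obtain ⟨j, hji⟩ := exists_ne i
  obtain ⟨m₁, hm₁, hmax⟩ := (Finset.univ.erase i).exists_max_image s ⟨j, by simpa using hji⟩
  have hm₁i : m₁ ≠ i := Finset.ne_of_mem_erase hm₁
  replace hmax : ∀ m ≠ i, s m ≤ s m₁ := fun m hm => hmax m (by simpa using hm)
  set e := s m₁ • v - o.rightAngleRotation v
  have hωe : o.areaForm v e = -1 := by simp [e, hv1]
  have hve : ⟪v, e⟫ = s m₁ := by simp [e, inner_sub_right, real_inner_smul_right, hv1]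
  have he0 : e ≠ 0 := fun h => by simp [h] at hωe
  have hemin : MinAt x e i := fun m => by
    rcases eq_or_ne m i with rfl | hm
    · exact le_rfl
    · have := hv.inner_sub_inner_eq o hv1 hm e
      rw [hve, hωe] at this
      have hα : 0 < ⟪v, x m - x i⟫ := by rw [inner_sub_right]; linarith [hv m hm]
      nlinarith [mul_nonneg hα.le (sub_nonneg.2 (hmax m hm))]
  have hetie : ⟪e, x m₁⟫ = ⟪e, x i⟫ := by
    have := hv.inner_sub_inner_eq o hv1 hm₁i e
    rwa [hve, hωe, neg_one_mul, add_neg_cancel, mul_zero, sub_eq_zero] at this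
  refine ⟨‖e‖⁻¹ • e, ⟨⟨norm_smul_inv_norm he0, hemin.smul (by positivity), m₁, hm₁i, by
    rw [real_inner_smul_left, real_inner_smul_left, hetie]⟩, by
    rw [map_smul, hωe, smul_eq_mul, mul_neg_one, neg_lt_zero]; positivity⟩, ?_⟩
  rintro w ⟨hw, hwv⟩
  exact eq_inv_norm_smul_of_eq_smul hw.1 (neg_pos.2 hwv)
    (hw.eq_smul_slope_smul_sub o hv hv1 hm₁i hmax hwv)

theorem exists_setOf_isEdgeNormalAt_eq_pair [Fintype ι] [Nontrivial ι]
    (hi : ∃ v, StrictMinAt x v i) : ∃ a b : E, a ≠ b ∧ {w | IsEdgeNormalAt x w i} = {a, b} := by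
  obtain ⟨o⟩ := nonempty_orientation (E := E)
  obtain ⟨u, hu, hu1⟩ : ∃ u, StrictMinAt x u i ∧ ‖u‖ = 1 := by
    obtain ⟨v, hv⟩ := hi
    obtain ⟨j, hji⟩ := exists_ne i
    have hv0 : v ≠ 0 := by rintro rfl; simpa using hv j hji
    refine ⟨‖v‖⁻¹ • v, fun m hm => ?_, norm_smul_inv_norm hv0⟩
    simp only [real_inner_smul_left]
    exact mul_lt_mul_of_pos_left (hv m hm) (by positivity)
  -- one edge normal on each side of `ℝ u`, read off with the two orientations
  obtain ⟨a, ⟨ha, hau⟩, ha_uniq⟩ := hu.existsUnique_isEdgeNormalAt_areaForm_neg o hu1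
  obtain ⟨b, ⟨hb, hbu⟩, hb_uniq⟩ := hu.existsUnique_isEdgeNormalAt_areaForm_neg (-o) hu1
  simp only [Orientation.areaForm_neg_orientation, LinearMap.neg_apply, neg_neg_iff_pos]
    at hbu hb_uniq
  refine ⟨a, b, fun hab => (hau.trans (hab ▸ hbu)).false, Subset.antisymm (fun w hw => ?_) ?_⟩
  · rcases lt_trichotomy (o.areaForm u w) 0 with h | h | h
    · exact Or.inl (ha_uniq w ⟨hw, h⟩)
    · obtain ⟨hw1, -, m, hm, htie⟩ := hw
      obtain ⟨c, rfl⟩ :=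
        o.exists_eq_smul_of_areaForm_eq_zero (norm_ne_zero_iff.1 (hu1.trans_ne one_ne_zero)) h
      rw [real_inner_smul_left, real_inner_smul_left] at htie
      obtain rfl : c = 0 := by
        by_contra hc
        exact (hu m hm).ne' (mul_left_cancel₀ hc htie)
      simp at hw1
    · exact Or.inr (hb_uniq w ⟨hw, h⟩)
  · rintro w (rfl | rfl)
    exacts [ha, hb]

theorem encard_setOf_isEdgeNormal [Fintype ι] [Nontrivial ι] (hx : ∀ i, ∃ v, StrictMinAt x v i) :
    {w | IsEdgeNormal x w}.encard = Fintype.card ι := by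
  classical
  choose a b hab hpair using fun i => exists_setOf_isEdgeNormalAt_eq_pair (hx i)
  have hfin : {w | IsEdgeNormal x w}.Finite := by
    refine (finite_iUnion fun i => toFinite ({a i, b i} : Set E)).subset fun w hw => ?_
    obtain ⟨i, hi⟩ : ∃ i, MinAt x w i := let ⟨_, i, _, _, hi, _⟩ := hw; ⟨i, hi⟩
    exact mem_iUnion.2 ⟨i, hpair i ▸ isEdgeNormal_and_minAt_iff.1 ⟨hw, hi⟩⟩
  have hcount := Finset.card_mul_eq_card_mul (fun w i => MinAt x w i) (s := hfin.toFinset)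
    (t := Finset.univ) (m := 2) (n := 2) (fun w hw => ?_) (fun i _ => ?_)
  · rw [hfin.encard_eq_coe_toFinset_card, Finset.card_univ] at *
    norm_cast
    omega
  · obtain ⟨i, j, hij, h⟩ := (hfin.mem_toFinset.1 hw).exists_setOf_minAt_eq_pair hx
    refine Finset.card_eq_two.2 ⟨i, j, hij, Finset.ext fun m => ?_⟩
    simpa [Finset.bipartiteAbove] using Set.ext_iff.1 h m
  · refine Finset.card_eq_two.2 ⟨a i, b i, hab i, Finset.ext fun w => ?_⟩
    simpa [Finset.bipartiteBelow, isEdgeNormal_and_minAt_iff] using Set.ext_iff.1 (hpair i) w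

theorem Orientation.areaForm_mul_areaForm_neg_of_strictMinAt (o : Orientation ℝ E (Fin 2))
    {vi vj : E} (hw : w ≠ 0) (hi : MinAt x w i) (hj : MinAt x w j) (hij : i ≠ j)
    (hvi : StrictMinAt x vi i) (hvj : StrictMinAt x vj j) :
    o.areaForm w vi * o.areaForm w vj < 0 := by
  have off_line : ∀ {k l v}, MinAt x w k → MinAt x w l → l ≠ k → StrictMinAt x v k →
      o.areaForm w v ≠ 0 := fun hk hl hlk hv h => by
    obtain ⟨c, rfl⟩ := o.exists_eq_smul_of_areaForm_eq_zero hw h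
    have := hv _ hlk
    rw [real_inner_smul_left, real_inner_smul_left, le_antisymm (hk _) (hl _)] at this
    exact this.false
  refine (mul_ne_zero (off_line hi hj hij.symm hvi) (off_line hj hi hij hvj)).lt_or_gt.resolve_right
    fun h => ?_
  rcases o.exists_eq_add_of_areaForm_mul_pos hw h with ⟨α, β, hα, hβ, h⟩ | ⟨α, β, hα, hβ, h⟩
  · exact (h ▸ hi.add_strictMinAt hvi hα hβ).not_minAt hij.symm hvj.minAt
  · exact (h ▸ hj.add_strictMinAt hvj hα hβ).not_minAt hij hvi.minAt

theorem IsEdgeNormal.eq_of_forall_inner_le {K : Set E} {p w' : E} (hK : (interior K).Nonempty)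
    (hv : ∀ i, ∃ v, StrictMinAt x v i ∧ ¬ ∀ y ∈ K, ⟪v, y⟫ ≤ ⟪v, p⟫)
    (hw : IsEdgeNormal x w) (hw' : IsEdgeNormal x w')
    (hpw : ∀ y ∈ K, ⟪w, y⟫ ≤ ⟪w, p⟫) (hpw' : ∀ y ∈ K, ⟪w', y⟫ ≤ ⟪w', p⟫) : w = w' := by
  obtain ⟨o⟩ := nonempty_orientation (E := E)
  have hw0 := hw.ne_zero
  obtain ⟨hw1, i, j, hij, hi, hj⟩ := hw
  obtain ⟨vi, hvi, hvip⟩ := hv i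
  obtain ⟨vj, hvj, hvjp⟩ := hv j
  by_contra hne
  have hww' : o.areaForm w w' ≠ 0 := by
    intro h
    obtain ⟨c, rfl⟩ := o.exists_eq_smul_of_areaForm_eq_zero hw0 h
    have hc : |c| = 1 := by simpa [norm_smul, hw1] using hw'.1
    rcases (abs_eq zero_le_one).1 hc with rfl | rfl
    · exact hne (one_smul ℝ w).symm
    · obtain ⟨z, hz⟩ := hK
      simp only [neg_one_smul, inner_neg_left, neg_le_neg_iff] at hpw'
      exact (inner_lt_of_mem_interior hw0 hz hpw).not_ge (hpw' z (interior_subset hz))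
  -- `w'` cannot lie on the side of `ℝ w` containing an exposing direction of `i` or of `j`
  have side : ∀ {k v}, MinAt x w k → StrictMinAt x v k → (¬ ∀ y ∈ K, ⟪v, y⟫ ≤ ⟪v, p⟫) →
      o.areaForm w v * o.areaForm w w' ≤ 0 := fun hk hv hvp => not_lt.1 fun h => by
    rcases o.exists_eq_add_of_areaForm_mul_pos hw0 h with ⟨α, β, hα, hβ, h⟩ | ⟨α, β, hα, hβ, h⟩
    · exact hw'.not_strictMinAt (h ▸ hk.add_strictMinAt hv hα hβ)
    · refine hvp (h ▸ fun y hy => ?_)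
      simp only [inner_add_left, real_inner_smul_left]
      nlinarith [mul_le_mul_of_nonneg_left (hpw y hy) hα,
        mul_le_mul_of_nonneg_left (hpw' y hy) hβ.le]
  nlinarith [mul_nonneg_of_nonpos_of_nonpos (side hi hvi hvip) (side hj hvj hvjp),
    mul_neg_of_neg_of_pos (o.areaForm_mul_areaForm_neg_of_strictMinAt hw0 hi hj hij hvi hvj)
      (mul_self_pos.2 hww')]

end TwoDimensional

section Translates

instance : Fact (finrank ℝ Plane = 2) := ⟨finrank_euclideanSpace_fin⟩

variable {C K : Set Plane} {a b p u : Plane}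

theorem IsOuterNormalAt.ne_zero (hu : IsOuterNormalAt K p u) : u ≠ 0 :=
  norm_ne_zero_iff.1 (hu.1.trans_ne one_ne_zero)

theorem IsOuterNormalAt.mono {L : Set Plane} (hu : IsOuterNormalAt K p u) (hLK : L ⊆ K) :
    IsOuterNormalAt L p u :=
  ⟨hu.1, fun y hy => hu.2 y (hLK hy)⟩

theorem IsSingularPt.mem (hK : IsClosed K) (h : IsSingularPt K p) : p ∈ K :=
  hK.frontier_subset h.1

theorem IsConvexDomain.exists_isOuterNormalAt (hK : IsConvexDomain K) (hp : p ∈ frontier K) :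
    ∃ u, IsOuterNormalAt K p u :=
  exists_unit_forall_inner_le_of_mem_frontier hK.2.1 hK.2.2 hp

theorem IsStrictConvexDomain.strictConvex (hC : IsStrictConvexDomain C) : StrictConvex ℝ C := by
  intro p hp q hq hpq a b ha hb hab
  have hseg : a • p + b • q ∈ openSegment ℝ p q := ⟨a, b, ha, hb, hab, rfl⟩
  by_cases hpi : p ∈ interior C
  · exact hC.1.2.1.openSegment_interior_self_subset_interior hpi hq hseg
  by_cases hqi : q ∈ interior C
  · exact hC.1.2.1.openSegment_self_interior_subset_interior hp hqi hseg
  exact hC.2 p ⟨subset_closure hp, hpi⟩ q ⟨subset_closure hq, hqi⟩ hpq hseg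

theorem IsConvexDomain.vadd (hC : IsConvexDomain C) (a : Plane) : IsConvexDomain (a +ᵥ C) :=
  ⟨by rw [← image_vadd]; exact hC.1.image (continuous_const_vadd a), hC.2.1.vadd a,
    by rw [interior_vadd]; exact hC.2.2.vadd_set⟩

theorem IsConvexDomain.isClosed_iInter_vadd {ι : Type*} (hC : IsConvexDomain C)
    (x : ι → Plane) : IsClosed (⋂ i, x i +ᵥ C) :=
  isClosed_iInter fun i => (hC.vadd (x i)).1.isClosed

theorem sub_mem_of_mem_vadd (hp : p ∈ a +ᵥ C) : p - a ∈ C := by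
  rwa [mem_vadd_set_iff_neg_vadd_mem, vadd_eq_add, neg_add_eq_sub] at hp

theorem isOuterNormalAt_vadd_iff :
    IsOuterNormalAt (a +ᵥ C) p u ↔ IsOuterNormalAt C (p - a) u := by
  refine and_congr Iff.rfl ⟨fun h y hy => ?_, fun h y hy => ?_⟩
  · have := h (a +ᵥ y) (vadd_mem_vadd_set hy)
    rw [vadd_eq_add, inner_add_right] at this
    rw [inner_sub_right]
    linarith
  · have := h _ (sub_mem_of_mem_vadd hy)
    rw [inner_sub_right, inner_sub_right] at this
    linarith

theorem IsSmoothDomain.vadd (hC : IsSmoothDomain C) (a : Plane) : IsSmoothDomain (a +ᵥ C) := by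
  intro p hp
  rw [frontier_vadd] at hp
  simpa only [isOuterNormalAt_vadd_iff] using hC _ (sub_mem_of_mem_vadd hp)

theorem IsOuterNormalAt.inner_le_of_mem_vadd (hu : IsOuterNormalAt (a +ᵥ C) p u)
    (hp : p ∈ b +ᵥ C) : ⟪u, a⟫ ≤ ⟪u, b⟫ := by
  have := (isOuterNormalAt_vadd_iff.1 hu).2 _ (sub_mem_of_mem_vadd hp)
  rw [inner_sub_right, inner_sub_right] at this
  linarith

theorem IsOuterNormalAt.inner_lt_of_mem_interior_vadd (hu : IsOuterNormalAt (a +ᵥ C) p u)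
    (hp : p ∈ interior (b +ᵥ C)) : ⟪u, a⟫ < ⟪u, b⟫ := by
  rw [interior_vadd] at hp
  have := inner_lt_of_mem_interior hu.ne_zero (sub_mem_of_mem_vadd hp)
    (isOuterNormalAt_vadd_iff.1 hu).2
  rw [inner_sub_right, inner_sub_right] at this
  linarith

end Translates

section Intersection

variable {ι : Type*} [Fintype ι] {C : Set Plane} {x : ι → Plane} {p u : Plane}

local notation "𝒯" => ⋂ i, x i +ᵥ C

theorem isOuterNormalAt_vadd_of_forall_ne_mem_interior (hC : Convex ℝ C) {i : ι} (hp : p ∈ 𝒯)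
    (hint : ∀ j ≠ i, p ∈ interior (x j +ᵥ C)) (hu : IsOuterNormalAt 𝒯 p u) :
    IsOuterNormalAt (x i +ᵥ C) p u := by
  refine ⟨hu.1, isMaxOn_iff.1 (IsMaxOn.of_isLocalMaxOn_of_concaveOn (mem_iInter.1 hp i) ?_
    ((innerₗ Plane u).concaveOn (hC.vadd (x i))))⟩
  have hU : (⋂ j ∈ {j | j ≠ i}, interior (x j +ᵥ C)) ∈ 𝓝 p :=
    (biInter_mem (toFinite _)).2 fun j hj => isOpen_interior.mem_nhds (hint j hj)
  filter_upwards [inter_mem_nhdsWithin (x i +ᵥ C) hU] with y ⟨hyi, hyU⟩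
  refine hu.2 y (mem_iInter.2 fun j => ?_)
  rcases eq_or_ne j i with rfl | hj
  · exact hyi
  · exact interior_subset (mem_iInter₂.1 hyU j hj)

theorem IsSingularPt.exists_ne_mem_frontier (hC : IsConvexDomain C) (hCs : IsSmoothDomain C)
    (hsing : IsSingularPt 𝒯 p) :
    ∃ i j, i ≠ j ∧ p ∈ frontier (x i +ᵥ C) ∧ p ∈ frontier (x j +ᵥ C) := by
  obtain ⟨hpf, u, v, huv, hu, hv⟩ := hsing
  have hclosed i := (hC.vadd (x i)).1.isClosed
  have hp : p ∈ 𝒯 := (isClosed_iInter hclosed).frontier_subset hpf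
  obtain ⟨i, hi⟩ := (mem_frontier_iInter_iff hclosed hp).1 hpf
  by_contra! hnot
  have hint : ∀ j ≠ i, p ∈ interior (x j +ᵥ C) := fun j hj => by
    by_contra h
    exact hnot i j hj.symm hi ⟨subset_closure (mem_iInter.1 hp j), h⟩
  exact huv (((hCs.vadd (x i)) p hi).unique
    (isOuterNormalAt_vadd_of_forall_ne_mem_interior hC.2.1 hp hint hu)
    (isOuterNormalAt_vadd_of_forall_ne_mem_interior hC.2.1 hp hint hv))

theorem isSingularPt_of_mem_frontier (hC : IsStrictConvexDomain C) (hx : Function.Injective x)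
    (hp : p ∈ 𝒯) {i j : ι} (hij : i ≠ j) (hi : p ∈ frontier (x i +ᵥ C))
    (hj : p ∈ frontier (x j +ᵥ C)) : IsSingularPt 𝒯 p := by
  have hclosed i := (hC.1.vadd (x i)).1.isClosed
  obtain ⟨u, hu⟩ := (hC.1.vadd (x i)).exists_isOuterNormalAt hi
  obtain ⟨v, hv⟩ := (hC.1.vadd (x j)).exists_isOuterNormalAt hj
  refine ⟨(mem_frontier_iInter_iff hclosed hp).2 ⟨i, hi⟩, u, v, fun huv => hij (hx ?_),
    hu.mono (iInter_subset _ i), hv.mono (iInter_subset _ j)⟩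
  subst huv
  have hu' := isOuterNormalAt_vadd_iff.1 hu
  have hv' := isOuterNormalAt_vadd_iff.1 hv
  exact sub_right_injective (hC.strictConvex.eq_of_forall_inner_le hu.ne_zero
    (sub_mem_of_mem_vadd (mem_iInter.1 hp i)) (sub_mem_of_mem_vadd (mem_iInter.1 hp j))
    hu'.2 hv'.2)

theorem exists_mem_frontier_forall_ne_mem_interior (hC : IsConvexDomain C)
    (hint : (interior 𝒯).Nonempty) {j : ι} (hred : 𝒯 ⊂ ⋂ i ∈ {i | i ≠ j}, x i +ᵥ C) :
    ∃ z ∈ frontier (x j +ᵥ C), ∀ i ≠ j, z ∈ interior (x i +ᵥ C) := by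
  obtain ⟨q, hq, hqT⟩ := exists_of_ssubset hred
  have hqj : q ∉ x j +ᵥ C := fun h => hqT (mem_iInter.2 fun i => by
    rcases eq_or_ne i j with rfl | hi
    · exact h
    · exact mem_iInter₂.1 hq i hi)
  obtain ⟨c, hc⟩ := hint
  rw [interior_iInter_of_finite, mem_iInter] at hc
  obtain ⟨z, hz, hzf⟩ := (convex_segment c q).isPreconnected.inter_frontier_nonempty
    ⟨c, left_mem_segment ℝ c q, interior_subset (hc j)⟩ ⟨q, right_mem_segment ℝ c q, hqj⟩
  refine ⟨z, hzf, fun i hi => ?_⟩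
  rw [← insert_endpoints_openSegment] at hz
  rcases hz with rfl | rfl | hz
  · exact hc i
  · exact absurd ((hC.vadd (x j)).1.isClosed.frontier_subset hzf) hqj
  · exact (hC.2.1.vadd (x i)).openSegment_interior_self_subset_interior (hc i)
      (mem_iInter₂.1 hq i hi) hz

theorem exists_strictMinAt_not_forall_inner_le (hC : IsStrictConvexDomain C)
    (hCs : IsSmoothDomain C) (hint : (interior 𝒯).Nonempty) {j : ι}
    (hred : 𝒯 ⊂ ⋂ i ∈ {i | i ≠ j}, x i +ᵥ C) :
    ∃ v, StrictMinAt x v j ∧ ∀ p, IsSingularPt 𝒯 p → ¬ ∀ y ∈ 𝒯, ⟪v, y⟫ ≤ ⟪v, p⟫ := by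
  obtain ⟨z, hzf, hzint⟩ := exists_mem_frontier_forall_ne_mem_interior hC.1 hint hred
  have hzj : z ∈ x j +ᵥ C := (hC.1.vadd (x j)).1.isClosed.frontier_subset hzf
  have hzT : z ∈ 𝒯 := mem_iInter.2 fun i => by
    rcases eq_or_ne i j with rfl | hi
    · exact hzj
    · exact interior_subset (hzint i hi)
  obtain ⟨v, hv⟩ := (hC.1.vadd (x j)).exists_isOuterNormalAt hzf
  refine ⟨v, fun i hi => hv.inner_lt_of_mem_interior_vadd (hzint i hi), fun p hsing hpv => ?_⟩
  have hpT : p ∈ 𝒯 := hsing.mem (hC.1.isClosed_iInter_vadd x)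
  -- the point of `𝒯` exposed by `v` is `z`, which lies on the boundary of one translate only
  obtain rfl := (strictConvex_iInter fun i => hC.strictConvex.vadd (x i)).eq_of_forall_inner_le
    hv.ne_zero hpT hzT hpv (hv.mono (iInter_subset _ j)).2
  obtain ⟨i, i', hii', hi, hi'⟩ := hsing.exists_ne_mem_frontier hC.1 hCs
  rcases eq_or_ne i j with rfl | hij
  · exact hi'.2 (hzint i' (Ne.symm hii'))
  · exact hi.2 (hzint i hij)

theorem IsEdgeNormal.exists_isSingularPt [Nonempty ι] (hC : IsStrictConvexDomain C)
    (hx : Function.Injective x) (hint : (interior 𝒯).Nonempty) {w : Plane}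
    (hw : IsEdgeNormal x w) : ∃ p, IsSingularPt 𝒯 p ∧ IsOuterNormalAt 𝒯 p w := by
  have hclosed i := (hC.1.vadd (x i)).1.isClosed
  obtain ⟨p, hp, hpmax⟩ := ((hC.1.vadd (x (Classical.arbitrary ι))).1.of_isClosed_subset
    (isClosed_iInter hclosed) (iInter_subset _ _)).exists_isMaxOn
    (hint.mono interior_subset) (f := fun y => ⟪w, y⟫) (by fun_prop)
  have hpw : IsOuterNormalAt 𝒯 p w := ⟨hw.1, isMaxOn_iff.1 hpmax⟩
  have hpf : p ∈ frontier 𝒯 :=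
    ⟨subset_closure hp, fun h => (inner_lt_of_mem_interior hw.ne_zero h hpw.2).false⟩
  refine ⟨p, ?_, hpw⟩
  by_contra hns
  obtain ⟨i, hi⟩ := (mem_frontier_iInter_iff hclosed hp).1 hpf
  -- otherwise `x i` alone would minimize `⟪w, x ·⟫`
  have hint' : ∀ j ≠ i, p ∈ interior (x j +ᵥ C) := fun j hj => by
    by_contra h
    exact hns (isSingularPt_of_mem_frontier hC hx hp hj.symm hi
      ⟨subset_closure (mem_iInter.1 hp j), h⟩)
  have hwi := isOuterNormalAt_vadd_of_forall_ne_mem_interior hC.1.2.1 hp hint' hpw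
  exact hw.not_strictMinAt fun j hj => hwi.inner_lt_of_mem_interior_vadd (hint' j hj)

theorem IsSingularPt.exists_isEdgeNormal (hC : IsConvexDomain C) (hCs : IsSmoothDomain C)
    (hint : (interior 𝒯).Nonempty) (hsing : IsSingularPt 𝒯 p) :
    ∃ w, IsEdgeNormal x w ∧ IsOuterNormalAt 𝒯 p w := by
  have hp : p ∈ 𝒯 := hsing.mem (hC.isClosed_iInter_vadd x)
  have hminAt : ∀ {i u}, IsOuterNormalAt (x i +ᵥ C) p u → MinAt x u i :=
    fun hu m => hu.inner_le_of_mem_vadd (mem_iInter.1 hp m)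
  obtain ⟨i, j, hij, hi, hj⟩ := hsing.exists_ne_mem_frontier hC hCs
  obtain ⟨ui, hui⟩ := (hC.vadd (x i)).exists_isOuterNormalAt hi
  obtain ⟨uj, huj⟩ := (hC.vadd (x j)).exists_isOuterNormalAt hj
  obtain ⟨t, ⟨ht0, ht1⟩, m, hmi, hgi, hgm⟩ :=
    exists_minAt_minAt_of_segment (hminAt hui) hij.symm (hminAt huj i)
  set g := (1 - t) • ui + t • uj
  have hg : ∀ y ∈ 𝒯, ⟪g, y⟫ ≤ ⟪g, p⟫ := fun y hy => by
    have h1 := (hui.mono (iInter_subset _ i)).2 y hy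
    have h2 := (huj.mono (iInter_subset _ j)).2 y hy
    simp only [g, inner_add_left, real_inner_smul_left]
    nlinarith
  have hg0 : g ≠ 0 := by
    obtain ⟨c, hc⟩ := hint
    have h1 := inner_lt_of_mem_interior hui.ne_zero hc (hui.mono (iInter_subset _ i)).2
    have h2 := inner_lt_of_mem_interior huj.ne_zero hc (huj.mono (iInter_subset _ j)).2
    intro h
    have : ⟪g, c⟫ < ⟪g, p⟫ := by
      simp only [g, inner_add_left, real_inner_smul_left]
      rcases ht0.eq_or_lt with rfl | ht0
      · simpa using h1
      · nlinarith
    simp [h] at this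
  refine ⟨‖g‖⁻¹ • g, ⟨norm_smul_inv_norm hg0, i, m, hmi.symm, hgi.smul (by positivity),
    hgm.smul (by positivity)⟩, norm_smul_inv_norm hg0, fun y hy => ?_⟩
  simp only [real_inner_smul_left]
  exact mul_le_mul_of_nonneg_left (hg y hy) (by positivity)

theorem encard_setOf_isSingularPt_eq [Nonempty ι] (hC : IsStrictConvexDomain C)
    (hCs : IsSmoothDomain C) (hint : (interior 𝒯).Nonempty)
    (hred : ∀ j, 𝒯 ⊂ ⋂ i ∈ {i | i ≠ j}, x i +ᵥ C) :
    {p | IsSingularPt 𝒯 p}.encard = {w | IsEdgeNormal x w}.encard := by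
  have hexp j := exists_strictMinAt_not_forall_inner_le hC hCs hint (hred j)
  have hx := injective_of_forall_exists_strictMinAt fun j => (hexp j).imp fun _ => And.left
  have hT := strictConvex_iInter fun i => hC.strictConvex.vadd (x i)
  have hTcl := hC.1.isClosed_iInter_vadd x
  choose! F hF using fun w (hw : IsEdgeNormal x w) => hw.exists_isSingularPt hC hx hint
  have hbij : BijOn F {w | IsEdgeNormal x w} {p | IsSingularPt 𝒯 p} := by
    refine ⟨fun w hw => (hF w hw).1, fun w hw w' hw' hww' => ?_, fun p hp => ?_⟩
    · refine IsEdgeNormal.eq_of_forall_inner_le hint (fun i => ?_) hw hw' (hF w hw).2.2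
        (hww' ▸ (hF w' hw').2.2)
      obtain ⟨v, hv, hvp⟩ := hexp i
      exact ⟨v, hv, hvp _ (hF w hw).1⟩
    · obtain ⟨w, hw, hpw⟩ := IsSingularPt.exists_isEdgeNormal hC.1 hCs hint hp
      exact ⟨w, hw, hT.eq_of_forall_inner_le hpw.ne_zero ((hF w hw).1.mem hTcl) (hp.mem hTcl)
        (hF w hw).2.2 hpw.2⟩
  rw [← hbij.image_eq, hbij.injOn.encard_image]

end Intersection

theorem stmt12 (C : Set Plane) (hC : IsStrictConvexDomain C) (hCs : IsSmoothDomain C)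
    (n : ℕ) (hn : 2 ≤ n) (x : Fin n → Plane)
    (T : Fin n → Set Plane) (hT : ∀ i, T i = x i +ᵥ C)
    (hint : (interior (⋂ i, T i)).Nonempty)
    (hred : ∀ j : Fin n, (⋂ i, T i) ⊂ ⋂ i ∈ {i : Fin n | i ≠ j}, T i) :
    {p : Plane | IsSingularPt (⋂ i, T i) p}.encard = (n : ℕ∞) := by
  have : Nontrivial (Fin n) := Fin.nontrivial_iff_two_le.2 hn
  simp only [hT] at hint hred ⊢
  have hexp j := exists_strictMinAt_not_forall_inner_le hC hCs hint (hred j)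
  rw [encard_setOf_isSingularPt_eq hC hCs hint hred,
    encard_setOf_isEdgeNormal fun j => (hexp j).imp fun _ => And.left, Fintype.card_fin]
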